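/- Let λ and μ be partitions with the same number n of parts such that μ_i ≤ λ_i for all i, and let y ∈ P_λ be the greedy maximal rook placement 1̂ of μ (which is also a maximal rook placement on λ). Then {x ∈ P_λ : x ≤ y} = P_μ as sets of rook placements, and the lower interval of y in P_λ, with the induced order, is order-isomorphic to the rook poset P_μ. -/

import Mathlib

namespace RookPoset

/-- A partition with `n` parts: `part i` is the (1-based) part `λ_{i+1}`.
The parts are weakly increasing and contain the staircase (`λ_i ≥ i`, 1-based),
which in particular makes them positive. -/
structure Partition (n : ℕ) where
  part : Fin n → ℕ
  mono : Monotone part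
  staircase : ∀ i : Fin n, (i : ℕ) + 1 ≤ part i

/-- The largest part; equals `λ_n` when `n > 0`. -/
def Partition.maxPart {n : ℕ} (lam : Partition n) : ℕ :=
  Finset.univ.sup lam.part

/-- The part `λ_k` in 1-based indexing, with the convention `λ_m = n + 1` for `m > n`. -/
def Partition.partAt {n : ℕ} (lam : Partition n) (k : ℕ) : ℕ :=
  if h : 1 ≤ k ∧ k ≤ n then lam.part ⟨k - 1, by omega⟩ else n + 1

/-- The GJW sequence `(λ_1 - 1, λ_2 - 2, …, λ_n - n)` of a partition. -/
def Partition.gjw {n : ℕ} (lam : Partition n) : List ℕ :=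
  (List.finRange n).map fun i => lam.part i - ((i : ℕ) + 1)

/-- A maximal rook placement on the Ferrers board of `lam`: `col i` is the (1-based)
column of the rook in the (1-based) row `i + 1` (rows indexed bottom-up). -/
structure Placement {n : ℕ} (lam : Partition n) where
  col : Fin n → ℕ
  inj : Function.Injective col
  pos : ∀ i, 1 ≤ col i
  le_part : ∀ i, col i ≤ lam.part i

/-- The increasingly sorted list of the values `x i` over indices `i` with `(i : ℕ) < j`,
i.e. the sorted initial segment `{x_1, …, x_j}` (1-based). -/
def initSeg {n : ℕ} (x : Fin n → ℕ) (j : ℕ) : List ℕ :=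
  ((Finset.univ.filter fun i : Fin n => (i : ℕ) < j).image x).sort (· ≤ ·)

/-- The rook poset order: `x ≤ y` iff each sorted initial segment of `x` is
componentwise at most the corresponding sorted initial segment of `y`. -/
def rle {n : ℕ} {lam : Partition n} (x y : Placement lam) : Prop :=
  ∀ j : ℕ, List.Forall₂ (· ≤ ·) (initSeg x.col j) (initSeg y.col j)

/-- `y` covers `x` in the rook poset. -/
def rcovers {n : ℕ} {lam : Partition n} (x y : Placement lam) : Prop :=
  rle x y ∧ x ≠ y ∧ ∀ z : Placement lam, rle x z → rle z y → z = x ∨ z = y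

/-- `y` covers `x` in the subposet induced on `S`. -/
def rcoversIn {n : ℕ} {lam : Partition n} (S : Set (Placement lam)) (x y : Placement lam) :
    Prop :=
  x ∈ S ∧ y ∈ S ∧ rle x y ∧ x ≠ y ∧ ∀ z ∈ S, rle x z → rle z y → z = x ∨ z = y

/-- `t` is the greedy placement `1̂`: for each row in turn (bottom-up), the rook is placed
in the largest column `≤ λ_i` not used by a lower row. -/
def IsGreedy {n : ℕ} {lam : Partition n} (t : Placement lam) : Prop :=
  ∀ i : Fin n, ∀ m : ℕ, 1 ≤ m → m ≤ lam.part i →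
    (∀ k : Fin n, k < i → t.col k ≠ m) → m ≤ t.col i

/-- `x` is obtained from `y` by the switch move on the rooks in rows `i < k`:
the rectangle spanned by the rooks at `(i, y.col i)` and `(k, y.col k)` contains no other rook,
and the two rooks exchange columns. -/
def SwitchMove {n : ℕ} {lam : Partition n} (y x : Placement lam) (i k : Fin n) : Prop :=
  i < k ∧ y.col k < y.col i ∧
  (∀ r : Fin n, i ≤ r → r ≤ k → y.col k ≤ y.col r → y.col r ≤ y.col i → r = i ∨ r = k) ∧
  x.col i = y.col k ∧ x.col k = y.col i ∧
  ∀ r : Fin n, r ≠ i → r ≠ k → x.col r = y.col r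

/-- `x` is obtained from `y` by a push move on the rook in row `i`: the rook moves to an
empty column `c` to its left such that every column strictly between `c` and its old column
contains a rook in a row below row `i`. -/
def PushMove {n : ℕ} {lam : Partition n} (y x : Placement lam) (i : Fin n) : Prop :=
  ∃ c : ℕ, 1 ≤ c ∧ c < y.col i ∧ (∀ r : Fin n, y.col r ≠ c) ∧
    (∀ d : ℕ, c < d → d < y.col i → ∃ r : Fin n, r < i ∧ y.col r = d) ∧
    x.col i = c ∧ ∀ r : Fin n, r ≠ i → x.col r = y.col r

/-- `x` is obtained from `y` by a single switch or push move on the rook in row `i`. -/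
def MoveOnRow {n : ℕ} {lam : Partition n} (y x : Placement lam) (i : Fin n) : Prop :=
  (∃ k : Fin n, SwitchMove y x i k) ∨ PushMove y x i

/-- Two coatoms `c, c'` of the rook poset (with top element `t`) are entangled:
there are two distinct elements each of which is covered by both `c` and `c'`
and lies below no other coatom. -/
def Entangled {n : ℕ} {lam : Partition n} (t c c' : Placement lam) : Prop :=
  ∃ z₁ z₂ : Placement lam, z₁ ≠ z₂ ∧
    (rcovers z₁ c ∧ rcovers z₁ c' ∧
      ∀ d : Placement lam, rcovers d t → d ≠ c → d ≠ c' → ¬ rle z₁ d) ∧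
    (rcovers z₂ c ∧ rcovers z₂ c' ∧
      ∀ d : Placement lam, rcovers d t → d ≠ c → d ≠ c' → ¬ rle z₂ d)

/-- `X_I`: the set of elements of the rook poset lying below no coatom outside `I`. -/
def Xset {n : ℕ} {lam : Partition n} (t : Placement lam) (I : Set (Placement lam)) :
    Set (Placement lam) :=
  {z : Placement lam | ∀ c' : Placement lam, rcovers c' t → c' ∉ I → ¬ rle z c'}

/-- The completed permutation `σ_x` of `{1, …, λ_n}` (as a function on 1-based positions):
position `i ≤ n` holds `x_i`, and the remaining positions hold the unused values in
increasing order (i.e. each subsequent position receives the smallest value not yet used). -/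
def Placement.sigma {n : ℕ} {lam : Partition n} (x : Placement lam) : ℕ → ℕ := fun a =>
  if h : 1 ≤ a ∧ a ≤ n then x.col ⟨a - 1, by omega⟩
  else ((Finset.Icc 1 lam.maxPart \ Finset.univ.image x.col).sort (· ≤ ·)).getD (a - n - 1) 0

/-- The rank `r(x)`: the number of inversions of the completed permutation `σ_x`. -/
def Placement.rank {n : ℕ} {lam : Partition n} (x : Placement lam) : ℕ :=
  ((Finset.Icc 1 lam.maxPart ×ˢ Finset.Icc 1 lam.maxPart).filter
    fun p => p.1 < p.2 ∧ x.sigma p.2 < x.sigma p.1).card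

/-- Break a list after every entry equal to `1`. -/
def breakAfterOnes : List ℕ → List (List ℕ)
  | [] => []
  | a :: rest =>
    if a = 1 then [a] :: breakAfterOnes rest
    else
      match breakAfterOnes rest with
      | [] => [[a]]
      | b :: bs => (a :: b) :: bs

/-- The multiset of blocks of a partition: break the GJW sequence after every entry
equal to `1` and delete all entries equal to `0` (discarding empty blocks). -/
def Partition.blocks {n : ℕ} (lam : Partition n) : Multiset (List ℕ) :=
  (((breakAfterOnes lam.gjw).map fun b => b.filter (· ≠ 0)).filter
    (· ≠ ([] : List ℕ)) : List (List ℕ))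

/-- The conjugate of a block `b = (g_1, …, g_k)` ending in `1`: it is the GJW sequence of the
conjugate partition `ν'` of the partition `ν` with `ν_i = g_i + i`, where
`ν'_i = k + 2 - min {m | ν_m ≥ k + 2 - i}` with the convention `ν_{k+1} = k + 1`. -/
noncomputable def conjBlock (b : List ℕ) : List ℕ :=
  let k := b.length
  let nu : ℕ → ℕ := fun m => if m ≤ k then b.getD (m - 1) 0 + m else k + 1
  (List.range k).map fun i0 =>
    let i := i0 + 1
    (k + 2 - sInf {m : ℕ | 1 ≤ m ∧ k + 2 - i ≤ nu m}) - i

/-- A block ends in `1`. -/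
def endsInOne (b : List ℕ) : Prop := b.getLast? = some 1

/-- Two blocks are equivalent when they are equal, or one ends in `1` and the other is its
conjugate block. -/
def BlockEquiv (b b' : List ℕ) : Prop :=
  b = b' ∨ (endsInOne b ∧ b' = conjBlock b) ∨ (endsInOne b' ∧ b = conjBlock b')

/-- Two partitions have matching block data: their multisets of blocks become equal after
replacing some blocks ending in `1` by their conjugate blocks. -/
def MatchingBlocks {n m : ℕ} (lam : Partition n) (mu : Partition m) : Prop :=
  Multiset.Rel BlockEquiv lam.blocks mu.blocks

/-- The rook posets of `lam` and `mu` are isomorphic as partially ordered sets. -/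
def RookIso {n m : ℕ} (lam : Partition n) (mu : Partition m) : Prop :=
  ∃ e : Placement lam ≃ Placement mu, ∀ a b : Placement lam, rle a b ↔ rle (e a) (e b)

/-- A function `τ`, viewed as a permutation of `{1, …, N}`, is `312`-avoiding. -/
def Avoids312 (N : ℕ) (τ : ℕ → ℕ) : Prop :=
  ∀ a b c : ℕ, 1 ≤ a → a < b → b < c → c ≤ N → ¬ (τ b < τ c ∧ τ c < τ a)

/-- A permutation of `Fin N` is `312`-avoiding. -/
def Avoids312P {N : ℕ} (τ : Equiv.Perm (Fin N)) : Prop :=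
  ∀ a b c : Fin N, a < b → b < c → ¬ (τ b < τ c ∧ τ c < τ a)

/-- The Bruhat order on permutations, characterized by componentwise dominance of the
increasingly sorted initial segments. -/
def bruhatLE {N : ℕ} (σ τ : Equiv.Perm (Fin N)) : Prop :=
  ∀ j : ℕ, List.Forall₂ (· ≤ ·)
    (initSeg (fun a : Fin N => (σ a : ℕ)) j) (initSeg (fun a : Fin N => (τ a : ℕ)) j)

/-! Write `t` for the greedy placement of `μ`. If `x ≤ t`, the rook of `x` in row `i` is dominated
by a rook of `t` in some row `k ≤ i`, so `x_i ≤ t_k ≤ μ_k ≤ μ_i`. Conversely, two sorted lists of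
equal length are componentwise comparable once every upper set `{v, v + 1, …}` contains at most as
many entries of the first as of the second; for `x` inside `μ` this count comparison follows from
the greedy property that all columns in `(t_i, μ_i]` are occupied by lower rows. Since the order
only depends on the column functions, the isomorphism is the identity on them. -/

open Finset

lemma _root_.List.Forall₂.exists_of_mem_left {α β : Type*} {R : α → β → Prop} {l₁ : List α}
    {l₂ : List β} (h : List.Forall₂ R l₁ l₂) {a : α} (ha : a ∈ l₁) : ∃ b ∈ l₂, R a b := by
  obtain ⟨k, hk, rfl⟩ := List.mem_iff_getElem.1 ha
  exact ⟨_, List.getElem_mem (h.length_eq ▸ hk), h.get hk (h.length_eq ▸ hk)⟩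

theorem forall₂_le_of_countP_le : ∀ {A B : List ℕ}, A.Pairwise (· ≤ ·) → B.Pairwise (· ≤ ·) →
    A.length = B.length → (∀ v, A.countP (v ≤ ·) ≤ B.countP (v ≤ ·)) →
    List.Forall₂ (· ≤ ·) A B
  | [], [], _, _, _, _ => .nil
  | a :: A, b :: B, hA, hB, hlen, hcnt => by
    rw [List.pairwise_cons] at hA hB
    have hlen' : A.length = B.length := by simpa using hlen
    have hab : a ≤ b := by
      by_contra! hba
      have hAall : (a :: A).countP (b + 1 ≤ ·) = A.length + 1 := by
        rw [List.countP_eq_length.2 fun c hc => ?_, List.length_cons]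
        rcases List.mem_cons.1 hc with rfl | hc
        · simpa using hba
        · simpa using hba.trans_le (hA.1 c hc)
      have hBtail : (b :: B).countP (b + 1 ≤ ·) = B.countP (b + 1 ≤ ·) :=
        List.countP_cons_of_neg (by simp)
      have := hcnt (b + 1)
      have := B.countP_le_length (p := (b + 1 ≤ ·))
      omega
    refine .cons hab (forall₂_le_of_countP_le hA.2 hB.2 hlen' fun v => ?_)
    rcases le_or_gt v b with hvb | hbv
    · have hBall : B.countP (v ≤ ·) = B.length :=
        List.countP_eq_length.2 fun c hc => by simpa using hvb.trans (hB.1 c hc)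
      exact hBall ▸ hlen' ▸ List.countP_le_length
    · have := hcnt v
      rwa [List.countP_cons_of_neg (by simpa using hab.trans_lt hbv),
        List.countP_cons_of_neg (by simpa using hbv)] at this
  | [], _ :: _, _, _, hlen, _ | _ :: _, [], _, _, hlen, _ => by simp at hlen

lemma countP_initSeg {n : ℕ} {x : Fin n → ℕ} (hx : Function.Injective x) (j v : ℕ) :
    (initSeg x j).countP (v ≤ ·) = #{i : Fin n | (i : ℕ) < j ∧ v ≤ x i} := by
  rw [initSeg, (Finset.sort_perm_toList _ _).countP_eq, ← Multiset.coe_countP,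
    Finset.coe_toList, Multiset.countP_eq_card_filter, ← Finset.filter_val, Finset.card_val,
    Finset.filter_image, Finset.card_image_of_injective _ hx, Finset.filter_filter]

lemma length_initSeg {n : ℕ} {x : Fin n → ℕ} (hx : Function.Injective x) (j : ℕ) :
    (initSeg x j).length = #{i : Fin n | (i : ℕ) < j} := by
  rw [initSeg, Finset.length_sort, Finset.card_image_of_injective _ hx]

lemma initSeg_pairwise {n : ℕ} (x : Fin n → ℕ) (j : ℕ) : (initSeg x j).Pairwise (· ≤ ·) :=
  Finset.pairwise_sort _ _

lemma mem_initSeg_succ {n : ℕ} (x : Fin n → ℕ) (i : Fin n) : x i ∈ initSeg x (i + 1) := by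
  simpa [initSeg] using ⟨i, le_rfl, rfl⟩

lemma exists_lt_succ_of_mem_initSeg {n : ℕ} {x : Fin n → ℕ} {j a : ℕ}
    (ha : a ∈ initSeg x j) : ∃ i : Fin n, (i : ℕ) < j ∧ x i = a := by
  simpa [initSeg] using ha

lemma card_filter_le_sub_add_card {n : ℕ} {x : Fin n → ℕ} (hx : Function.Injective x)
    {f : Fin n → ℕ} (hxf : ∀ i, x i ≤ f i) (j v u : ℕ) :
    #{i : Fin n | (i : ℕ) < j ∧ v ≤ x i} ≤ (u - v) + #{i : Fin n | (i : ℕ) < j ∧ u ≤ f i} := by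
  calc #{i : Fin n | (i : ℕ) < j ∧ v ≤ x i}
      ≤ #{i : Fin n | (i : ℕ) < j ∧ v ≤ x i ∧ x i < u} + #{i : Fin n | (i : ℕ) < j ∧ u ≤ f i} :=
        (card_le_card fun i hi => by
          simp only [mem_union, mem_filter, mem_univ, true_and] at hi ⊢
          by_cases hiu : x i < u
          · exact .inl ⟨hi.1, hi.2, hiu⟩
          · exact .inr ⟨hi.1, (not_lt.1 hiu).trans (hxf i)⟩).trans (card_union_le _ _)
    _ ≤ #(Ico v u) + #{i : Fin n | (i : ℕ) < j ∧ u ≤ f i} := by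
        gcongr
        exact card_le_card_of_injOn x (fun i hi => by simp_all) hx.injOn
    _ = (u - v) + #{i : Fin n | (i : ℕ) < j ∧ u ≤ f i} := by rw [Nat.card_Ico]

lemma IsGreedy.exists_lt_col_eq {n : ℕ} {mu : Partition n} {t : Placement mu} (ht : IsGreedy t)
    {i : Fin n} {m : ℕ} (hlt : t.col i < m) (hm : m ≤ mu.part i) : ∃ k < i, t.col k = m := by
  by_contra! h
  exact absurd (ht i m ((t.pos i).trans hlt.le) hm h) (not_le.2 hlt)

/-- For the greedy placement `t` and the highest row `i₀ < j` with `t.col i₀ < v`, the columns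
in `[v, μ_{i₀}]` are all taken below row `i₀`, and every row `i < j` with `μ_i > μ_{i₀}` lies above
`i₀`, hence has its rook in a column `≥ v`. -/
lemma sub_add_card_le_of_isGreedy {n : ℕ} {mu : Partition n} {t : Placement mu} (ht : IsGreedy t)
    {j v : ℕ} {i₀ : Fin n} (hi₀j : (i₀ : ℕ) < j) (hi₀v : t.col i₀ < v)
    (hmax : ∀ i : Fin n, (i : ℕ) < j → t.col i < v → i ≤ i₀) :
    (mu.part i₀ + 1 - v) + #{i : Fin n | (i : ℕ) < j ∧ mu.part i₀ + 1 ≤ mu.part i} ≤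
      #{i : Fin n | (i : ℕ) < j ∧ v ≤ t.col i} := by
  set low := ({k : Fin n | k < i₀ ∧ v ≤ t.col k} : Finset (Fin n))
  set high := ({i : Fin n | (i : ℕ) < j ∧ mu.part i₀ + 1 ≤ mu.part i} : Finset (Fin n))
  have hlow : mu.part i₀ + 1 - v ≤ #low := by
    rw [← Nat.card_Ico]
    refine (card_le_card fun m hm => ?_).trans (card_image_le (f := t.col))
    rw [mem_Ico] at hm
    obtain ⟨k, hk, rfl⟩ := ht.exists_lt_col_eq (hi₀v.trans_le hm.1) (by omega)
    exact mem_image_of_mem _ (by simp [low, hk, hm.1])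
  have hdisj : Disjoint low high :=
    disjoint_filter.2 fun k _ hk hk' => by
      have := mu.mono hk.1.le
      omega
  calc (mu.part i₀ + 1 - v) + #high ≤ #low + #high := by gcongr
    _ = #(low ∪ high) := (card_union_of_disjoint hdisj).symm
    _ ≤ #{i : Fin n | (i : ℕ) < j ∧ v ≤ t.col i} := card_le_card fun i hi => by
        simp only [low, high, mem_union, mem_filter, mem_univ, true_and] at hi ⊢
        rcases hi with ⟨hi₀, hv⟩ | ⟨hij, hbig⟩
        · exact ⟨lt_trans (Fin.lt_def.1 hi₀) hi₀j, hv⟩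
        · refine ⟨hij, not_lt.1 fun hlt => ?_⟩
          have := mu.mono (hmax i hij hlt)
          omega

lemma card_filter_le_of_isGreedy {n : ℕ} {mu : Partition n} {t : Placement mu} (ht : IsGreedy t)
    {x : Fin n → ℕ} (hx : Function.Injective x) (hxmu : ∀ i, x i ≤ mu.part i) (j v : ℕ) :
    #{i : Fin n | (i : ℕ) < j ∧ v ≤ x i} ≤ #{i : Fin n | (i : ℕ) < j ∧ v ≤ t.col i} := by
  set below := ({i : Fin n | (i : ℕ) < j ∧ t.col i < v} : Finset (Fin n))
  rcases below.eq_empty_or_nonempty with hempty | hne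
  · refine card_le_card fun i hi => ?_
    simp only [mem_filter, mem_univ, true_and] at hi ⊢
    refine ⟨hi.1, not_lt.1 fun hlt => ?_⟩
    have hi : i ∈ below := by simp [below, hi.1, hlt]
    simp [hempty] at hi
  · have hmem := below.max'_mem hne
    simp only [below, mem_filter, mem_univ, true_and] at hmem
    calc #{i : Fin n | (i : ℕ) < j ∧ v ≤ x i}
        ≤ (mu.part (below.max' hne) + 1 - v) +
            #{i : Fin n | (i : ℕ) < j ∧ mu.part (below.max' hne) + 1 ≤ mu.part i} :=
          card_filter_le_sub_add_card hx hxmu j v _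
      _ ≤ _ := sub_add_card_le_of_isGreedy ht hmem.1 hmem.2 fun i hij hlt =>
          below.le_max' i (by simp [below, hij, hlt])

theorem forall_initSeg_le_iff_of_isGreedy {n : ℕ} {mu : Partition n} {t : Placement mu}
    (ht : IsGreedy t) {x : Fin n → ℕ} (hx : Function.Injective x) :
    (∀ j, List.Forall₂ (· ≤ ·) (initSeg x j) (initSeg t.col j)) ↔ ∀ i, x i ≤ mu.part i := by
  refine ⟨fun hxt i => ?_, fun hxmu j => ?_⟩
  · obtain ⟨b, hb, hxb⟩ := (hxt (i + 1)).exists_of_mem_left (mem_initSeg_succ x i)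
    obtain ⟨k, hk, rfl⟩ := exists_lt_succ_of_mem_initSeg hb
    exact hxb.trans <| (t.le_part k).trans <| mu.mono <| Fin.le_def.2 (by omega)
  · refine forall₂_le_of_countP_le (initSeg_pairwise _ _) (initSeg_pairwise _ _)
      (by rw [length_initSeg hx, length_initSeg t.inj]) fun v => ?_
    rw [countP_initSeg hx, countP_initSeg t.inj]
    exact card_filter_le_of_isGreedy ht hx hxmu j v

def placementSubboardEquiv {n : ℕ} {lam mu : Partition n}
    (hle : ∀ i : Fin n, mu.part i ≤ lam.part i) :
    {x : Placement lam // ∀ i, x.col i ≤ mu.part i} ≃ Placement mu where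
  toFun x := ⟨x.1.col, x.1.inj, x.1.pos, x.2⟩
  invFun z := ⟨⟨z.col, z.inj, z.pos, fun i => (z.le_part i).trans (hle i)⟩, z.le_part⟩
  left_inv _ := rfl
  right_inv _ := rfl

/-- If `μ_i ≤ λ_i` for all `i` and `y` is the greedy maximal rook placement
of `μ` (viewed as a placement on `λ`), then the elements of the rook poset of `λ` lying below
`y` are exactly the maximal rook placements on `μ`, and the lower interval of `y` is
order-isomorphic to the rook poset of `μ`. -/
theorem lower_interval_eq_subboard {n : ℕ} (lam mu : Partition n)
    (hle : ∀ i : Fin n, mu.part i ≤ lam.part i)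
    (ymu : Placement mu) (hg : IsGreedy ymu)
    (y : Placement lam) (hy : y.col = ymu.col) :
    (∀ x : Placement lam, rle x y ↔ ∀ i : Fin n, x.col i ≤ mu.part i) ∧
    ∃ e : {x : Placement lam // rle x y} ≃ Placement mu,
      (∀ x : {x : Placement lam // rle x y}, (e x).col = x.1.col) ∧
      ∀ a b : {x : Placement lam // rle x y}, rle a.1 b.1 ↔ rle (e a) (e b) := by
  have below_iff (x : Placement lam) : rle x y ↔ ∀ i, x.col i ≤ mu.part i := by
    rw [rle, hy]
    exact forall_initSeg_le_iff_of_isGreedy hg x.inj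
  exact ⟨below_iff, (Equiv.subtypeEquivRight below_iff).trans (placementSubboardEquiv hle),
    fun _ => rfl, fun _ _ => Iff.rfl⟩

end RookPoset
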